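/- arXiv:1810.08342 — 10 statements merged into one kernel-verified Lean document; each statement's English description precedes it below -/
import Mathlib

section
/- Let M be a positive natural number and let tasks be indexed by a nonempty finite set I, where task i has execution time C i and period P i, real numbers with 0 < C i ≤ P i, and suppose Σ_{i ∈ I} C i / P i ≤ M. Let 0 = b 0 < b 1 < ⋯ < b K be the strictly increasing enumeration of the finite set {0} ∪ {P i : i ∈ I}. For 1 ≤ k ≤ K set l k = b k − b (k−1), J k = {i ∈ I : b k ≤ P i}, and Cap k = (M − Σ_{i ∉ J k} C i / P i) · l k. Define X i k = (C i / P i) · l k for i ∈ J k (and X i k = 0 otherwise). Then: (JCC) for every task i, Σ_{k : b k ≤ P i} X i k = C i; (NIP) X i k ≤ l k for all i and k; and (PCC) for every k with 1 ≤ k ≤ K, Σ_{i ∈ J k} X i k ≤ Cap k. -/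
lemma fluid_tele (b : ℕ → ℝ) : ∀ n, ∑ k ∈ Finset.Icc 1 n, (b k - b (k - 1)) = b n - b 0 := by
  intro n
  induction n with
  | zero => simp
  | succ n ih =>
      rw [Finset.sum_Icc_succ_top (Nat.succ_le_succ (Nat.zero_le n)), ih]
      simp

/- Lemma 1: the fluid schedule `X i k = (C i / P i) · l k` satisfies the three
constraint types (JCC, NIP, PCC) of the active-job area AJA(0), where the
boundaries `b 0 = 0 < b 1 < ⋯ < b K` enumerate `{0} ∪ {P i : i ∈ I}`. -/
open Classical in
theorem fluid_schedule_satisfies_AJA0_constraints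
    (M : ℕ) (hM : 0 < M)
    (I : Finset ℕ) (hI : I.Nonempty)
    (C P : ℕ → ℝ)
    (hC : ∀ i ∈ I, 0 < C i) (hCP : ∀ i ∈ I, C i ≤ P i)
    (hU : ∑ i ∈ I, C i / P i ≤ (M : ℝ))
    (K : ℕ) (b : ℕ → ℝ)
    (hb0 : b 0 = 0)
    (hmono : ∀ k < K, b k < b (k + 1))
    (hcover : ∀ i ∈ I, ∃ k ≤ K, b k = P i)
    (himage : ∀ k ≤ K, b k = 0 ∨ ∃ i ∈ I, b k = P i)
    (X : ℕ → ℕ → ℝ)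
    (hX : ∀ i k, X i k =
      if b k ≤ P i then (C i / P i) * (b k - b (k - 1)) else 0) :
    -- (JCC)
    (∀ i ∈ I,
      ∑ k ∈ (Finset.Icc 1 K).filter (fun k => b k ≤ P i), X i k = C i) ∧
    -- (NIP)
    (∀ i ∈ I, ∀ k ∈ Finset.Icc 1 K, X i k ≤ b k - b (k - 1)) ∧
    -- (PCC)
    (∀ k ∈ Finset.Icc 1 K,
      ∑ i ∈ I.filter (fun i => b k ≤ P i), X i k ≤
        ((M : ℝ) - ∑ i ∈ I.filter (fun i => ¬ b k ≤ P i), C i / P i)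
          * (b k - b (k - 1))) := by
  have hP : ∀ i ∈ I, 0 < P i := fun i hi => lt_of_lt_of_le (hC i hi) (hCP i hi)
  have hle : ∀ j k, j ≤ k → k ≤ K → b j ≤ b k := by
    intro j k hjk hk
    induction hjk with
    | refl => exact le_refl _
    | @step m h ih =>
        exact le_trans (ih (le_trans (Nat.le_succ m) hk))
          (le_of_lt (hmono m (Nat.lt_of_succ_le hk)))
  have hlt : ∀ j k, j < k → k ≤ K → b j < b k := by
    intro j k hjk hk
    exact lt_of_lt_of_le (hmono j (lt_of_lt_of_le hjk hk)) (hle (j + 1) k hjk hk)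
  have hlpos : ∀ k ∈ Finset.Icc 1 K, 0 ≤ b k - b (k - 1) := by
    intro k hk
    rw [Finset.mem_Icc] at hk
    exact sub_nonneg.mpr (hle (k - 1) k (Nat.sub_le k 1) hk.2)
  refine ⟨?_, ?_, ?_⟩
  · -- JCC
    intro i hi
    obtain ⟨n, hnK, hbn⟩ := hcover i hi
    have hn1 : 1 ≤ n := by
      rcases Nat.eq_zero_or_pos n with h0 | h; · exfalso; rw [h0, hb0] at hbn; exact (hP i hi).ne hbn
      exact h
    have hset : (Finset.Icc 1 K).filter (fun k => b k ≤ P i) = Finset.Icc 1 n := by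
      ext k
      simp only [Finset.mem_filter, Finset.mem_Icc]
      constructor
      · rintro ⟨⟨h1, hK⟩, hb⟩
        refine ⟨h1, ?_⟩
        by_contra hnk
        push_neg at hnk
        have := hlt n k hnk hK
        rw [hbn] at this
        exact absurd hb (not_le.mpr this)
      · rintro ⟨h1, hn⟩
        exact ⟨⟨h1, le_trans hn hnK⟩, hbn ▸ hle k n hn hnK⟩
    rw [hset]
    have : ∀ k ∈ Finset.Icc 1 n, X i k = (C i / P i) * (b k - b (k - 1)) := by
      intro k hk
      rw [Finset.mem_Icc] at hk
      rw [hX, if_pos (hbn ▸ hle k n hk.2 hnK)]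
    rw [Finset.sum_congr rfl this, ← Finset.mul_sum, fluid_tele b n, hbn, hb0, sub_zero,
      div_mul_cancel₀ _ (hP i hi).ne']
  · -- NIP
    intro i hi k hk
    have hl := hlpos k hk
    rw [hX]
    split
    · calc (C i / P i) * (b k - b (k - 1)) ≤ 1 * (b k - b (k - 1)) := by
            apply mul_le_mul_of_nonneg_right _ hl
            exact (div_le_one (hP i hi)).mpr (hCP i hi)
        _ = _ := one_mul _
    · exact hl
  · -- PCC
    intro k hk
    have hl := hlpos k hk
    have hsum : ∀ i ∈ I.filter (fun i => b k ≤ P i),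
        X i k = (C i / P i) * (b k - b (k - 1)) := by
      intro i hi
      rw [Finset.mem_filter] at hi
      rw [hX, if_pos hi.2]
    rw [Finset.sum_congr rfl hsum, ← Finset.sum_mul]
    apply mul_le_mul_of_nonneg_right _ hl
    have hsplit := Finset.sum_filter_add_sum_filter_not I (fun i => b k ≤ P i)
      (fun i => C i / P i)
    linarith [hsplit]
end

section
/- Let M be a positive natural number and let tasks be indexed by a nonempty finite set I, where task i has execution time C i and period P i, real numbers with 0 < C i ≤ P i, and suppose Σ_{i ∈ I} C i / P i ≤ M. Let 0 = b 0 < b 1 < ⋯ < b K be the strictly increasing enumeration of the finite set {0} ∪ {P i : i ∈ I}, set l k = b k − b (k−1), J k = {i ∈ I : b k ≤ P i}, and Cap k = (M − Σ_{i ∉ J k} C i / P i) · l k for 1 ≤ k ≤ K. Then there exists a function X : I × {1,…,K} → ℝ with X i k ≥ 0 for all i, k; X i k = 0 whenever b k > P i; X i k ≤ l k for all i, k; Σ_{k : b k ≤ P i} X i k = C i for every i ∈ I; and Σ_{i ∈ J k} X i k ≤ Cap k for every k. -/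
/- Feasibility of the linear program (JCC, PCC, NIP) defining the active-job
area AJA(0): if the total utilization does not exceed `M`, then there is an
assignment `X i k` of execution times to windows satisfying all constraints. -/
open Classical in
theorem AJA0_linear_program_feasible
    (M : ℕ) (hM : 0 < M)
    (I : Finset ℕ) (hI : I.Nonempty)
    (C P : ℕ → ℝ)
    (hC : ∀ i ∈ I, 0 < C i) (hCP : ∀ i ∈ I, C i ≤ P i)
    (hU : ∑ i ∈ I, C i / P i ≤ (M : ℝ))
    (K : ℕ) (b : ℕ → ℝ)
    (hb0 : b 0 = 0)
    (hmono : ∀ k < K, b k < b (k + 1))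
    (hcover : ∀ i ∈ I, ∃ k ≤ K, b k = P i)
    (himage : ∀ k ≤ K, b k = 0 ∨ ∃ i ∈ I, b k = P i) :
    ∃ X : ℕ → ℕ → ℝ,
      -- nonnegativity
      (∀ i ∈ I, ∀ k ∈ Finset.Icc 1 K, 0 ≤ X i k) ∧
      -- no allocation after the deadline
      (∀ i ∈ I, ∀ k ∈ Finset.Icc 1 K, P i < b k → X i k = 0) ∧
      -- (NIP)
      (∀ i ∈ I, ∀ k ∈ Finset.Icc 1 K, X i k ≤ b k - b (k - 1)) ∧
      -- (JCC)
      (∀ i ∈ I,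
        ∑ k ∈ (Finset.Icc 1 K).filter (fun k => b k ≤ P i), X i k = C i) ∧
      -- (PCC)
      (∀ k ∈ Finset.Icc 1 K,
        ∑ i ∈ I.filter (fun i => b k ≤ P i), X i k ≤
          ((M : ℝ) - ∑ i ∈ I.filter (fun i => ¬ b k ≤ P i), C i / P i)
            * (b k - b (k - 1))) := by
  -- strict monotonicity of b on [0, K]
  have hsmono : ∀ j j', j < j' → j' ≤ K → b j < b j' := by
    intro j j' hlt hle
    induction j' with
    | zero => omega
    | succ n ih =>
      rcases Nat.lt_or_ge j n with h | h
      · exact lt_trans (ih h (by omega)) (hmono n (by omega))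
      · have : j = n := by omega
        subst this
        exact hmono j (by omega)
  have hP : ∀ i ∈ I, 0 < P i := fun i hi => lt_of_lt_of_le (hC i hi) (hCP i hi)
  -- the fluid schedule
  refine ⟨fun i k => if b k ≤ P i then C i / P i * (b k - b (k - 1)) else 0,
    ?_, ?_, ?_, ?_, ?_⟩
  · intro i hi k hk
    simp only [Finset.mem_Icc] at hk
    have hl : 0 ≤ b k - b (k - 1) := by
      have := hsmono (k - 1) k (by omega) hk.2
      linarith
    dsimp only
    split
    · exact mul_nonneg (div_nonneg (hC i hi).le (hP i hi).le) hl
    · exact le_refl 0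
  · intro i hi k hk hlt
    simp [not_le.mpr hlt]
  · intro i hi k hk
    simp only [Finset.mem_Icc] at hk
    have hl : 0 ≤ b k - b (k - 1) := by
      have := hsmono (k - 1) k (by omega) hk.2
      linarith
    dsimp only
    split
    · have hu : C i / P i ≤ 1 := (div_le_one (hP i hi)).mpr (hCP i hi)
      nlinarith
    · linarith
  · intro i hi
    obtain ⟨ki, hkiK, hki⟩ := hcover i hi
    have hki1 : 1 ≤ ki := by
      by_contra h
      have : ki = 0 := by omega
      rw [this, hb0] at hki
      exact absurd hki.symm (ne_of_gt (hP i hi))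
    have hfilt : (Finset.Icc 1 K).filter (fun k => b k ≤ P i)
        = Finset.Icc 1 ki := by
      ext k
      simp only [Finset.mem_filter, Finset.mem_Icc]
      constructor
      · rintro ⟨⟨h1, h2⟩, h3⟩
        refine ⟨h1, ?_⟩
        by_contra h
        have := hsmono ki k (by omega) h2
        rw [hki] at this
        linarith
      · rintro ⟨h1, h2⟩
        refine ⟨⟨h1, by omega⟩, ?_⟩
        rcases Nat.lt_or_ge k ki with h | h
        · have := hsmono k ki h hkiK
          rw [hki] at this; linarith
        · have : k = ki := by omega
          rw [this, hki]
    rw [hfilt]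
    have hall : ∀ k ∈ Finset.Icc 1 ki,
        (if b k ≤ P i then C i / P i * (b k - b (k - 1)) else 0)
          = C i / P i * (b k - b (k - 1)) := by
      intro k hk
      have : k ∈ (Finset.Icc 1 K).filter (fun k => b k ≤ P i) := by
        rw [hfilt]; exact hk
      simp only [Finset.mem_filter] at this
      rw [if_pos this.2]
    rw [Finset.sum_congr rfl hall, ← Finset.mul_sum]
    have htel : ∀ n, ∑ k ∈ Finset.Icc 1 n, (b k - b (k - 1)) = b n - b 0 := by
      intro n
      induction n with
      | zero => simp
      | succ m ih =>
        rw [Finset.sum_Icc_succ_top (by omega), ih]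
        simp
    rw [htel, hki, hb0, sub_zero]
    exact div_mul_cancel₀ _ (ne_of_gt (hP i hi))
  · intro k hk
    simp only [Finset.mem_Icc] at hk
    have hl : 0 ≤ b k - b (k - 1) := by
      have := hsmono (k - 1) k (by omega) hk.2
      linarith
    have hsum : ∑ i ∈ I.filter (fun i => b k ≤ P i),
        (if b k ≤ P i then C i / P i * (b k - b (k - 1)) else 0)
        = (∑ i ∈ I.filter (fun i => b k ≤ P i), C i / P i) * (b k - b (k - 1)) := by
      rw [Finset.sum_mul]
      refine Finset.sum_congr rfl ?_
      intro i hi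
      simp only [Finset.mem_filter] at hi
      rw [if_pos hi.2]
    rw [hsum]
    have hsplit : (∑ i ∈ I.filter (fun i => b k ≤ P i), C i / P i)
        + (∑ i ∈ I.filter (fun i => ¬ b k ≤ P i), C i / P i)
        = ∑ i ∈ I, C i / P i := Finset.sum_filter_add_sum_filter_not I _ _
    have : (∑ i ∈ I.filter (fun i => b k ≤ P i), C i / P i)
        ≤ (M : ℝ) - ∑ i ∈ I.filter (fun i => ¬ b k ≤ P i), C i / P i := by
      linarith
    exact mul_le_mul_of_nonneg_right this hl
end

section
/- Let M be a positive real number, let tasks be indexed by {1, 2, …, N} with utilizations u i satisfying 0 < u i ≤ 1 for every i and Σ_{i=1}^{N} u i ≤ M, and let windows be indexed by {2, …, K+1} with lengths l k > 0. Suppose: (i) for each k ∈ {2, …, K}, a set J k ⊆ {2, …, N} of old active tasks is given, and J (K+1) = ∅; (ii) nonnegative remaining execution times c i are given for i ∈ {2, …, N}; (iii) X* : {1,…,N} × {2,…,K+1} → ℝ satisfies X* i k ≥ 0 for all i, k, X* i k = 0 whenever i ∉ J k, Σ_{k=2}^{K+1} X* i k = c i for each i ∈ {2,…,N}, X* i k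 ≤ l k for all i, k, and Σ_{i ∈ J k} X* i k ≤ (M − Σ_{i ∈ {1,…,N} ∖ J k} u i) · l k for each k ∈ {2,…,K}; (iv) C 1 = u 1 · Σ_{k=2}^{K+1} l k. Define J' k = J k ∪ {1} for k ∈ {2,…,K+1} and define X by X i k = X* i k for i ≥ 2 and X 1 k = u 1 · l k. Then X satisfies: Σ_{k=2}^{K+1} X 1 k = C 1; Σ_{k=2}^{K+1} X i k = c i for each i ∈ {2,…,N}; X i k ≤ l k for all i, k; and Σ_{i ∈ J' k} X i k ≤ (M − Σ_{i ∈ {1,…,N} ∖ J' k} u i) · l k for every k ∈ {2,…,K+1}. -/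
/- Induction step in the proof of Theorem 1: a feasible solution `Xs` of
AJA(t₁), restricted to the windows `{2,…,K+1}` after the new arrival `t₂` and
augmented by the fluid allocation `u 1 · l k` for the newly arrived job of
task 1, is feasible for AJA(t₂). -/
theorem AJA_induction_step
    (M : ℝ) (hM : 0 < M) (N K : ℕ) (hN : 1 ≤ N)
    (u : ℕ → ℝ)
    (hu : ∀ i ∈ Finset.Icc 1 N, 0 < u i ∧ u i ≤ 1)
    (hU : ∑ i ∈ Finset.Icc 1 N, u i ≤ M)
    (l : ℕ → ℝ) (hl : ∀ k ∈ Finset.Icc 2 (K + 1), 0 < l k)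
    (J : ℕ → Finset ℕ)
    (hJ : ∀ k ∈ Finset.Icc 2 K, J k ⊆ Finset.Icc 2 N)
    (hJtop : J (K + 1) = ∅)
    (c : ℕ → ℝ) (hc : ∀ i ∈ Finset.Icc 2 N, 0 ≤ c i)
    (Xs : ℕ → ℕ → ℝ)
    (hXs0 : ∀ i ∈ Finset.Icc 1 N, ∀ k ∈ Finset.Icc 2 (K + 1), 0 ≤ Xs i k)
    (hXsJ : ∀ i ∈ Finset.Icc 1 N, ∀ k ∈ Finset.Icc 2 (K + 1),
      i ∉ J k → Xs i k = 0)
    (hXsc : ∀ i ∈ Finset.Icc 2 N, ∑ k ∈ Finset.Icc 2 (K + 1), Xs i k = c i)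
    (hXsl : ∀ i ∈ Finset.Icc 1 N, ∀ k ∈ Finset.Icc 2 (K + 1), Xs i k ≤ l k)
    (hXscap : ∀ k ∈ Finset.Icc 2 K,
      ∑ i ∈ J k, Xs i k ≤ (M - ∑ i ∈ Finset.Icc 1 N \ J k, u i) * l k)
    (C1 : ℝ) (hC1 : C1 = u 1 * ∑ k ∈ Finset.Icc 2 (K + 1), l k) :
    (let X : ℕ → ℕ → ℝ := fun i k => if i = 1 then u 1 * l k else Xs i k
     -- (JCC) for the newly arrived job of task 1
     (∑ k ∈ Finset.Icc 2 (K + 1), X 1 k = C1) ∧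
     -- (JCC) for the old active jobs
     (∀ i ∈ Finset.Icc 2 N, ∑ k ∈ Finset.Icc 2 (K + 1), X i k = c i) ∧
     -- (NIP)
     (∀ i ∈ Finset.Icc 1 N, ∀ k ∈ Finset.Icc 2 (K + 1), X i k ≤ l k) ∧
     -- (PCC) with the new active sets J' k = J k ∪ {1}
     (∀ k ∈ Finset.Icc 2 (K + 1),
       ∑ i ∈ insert 1 (J k), X i k ≤
         (M - ∑ i ∈ Finset.Icc 1 N \ insert 1 (J k), u i) * l k)) := by

  intro X
  have h1N : (1:ℕ) ∈ Finset.Icc 1 N := Finset.mem_Icc.2 ⟨le_refl 1, hN⟩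
  have hu1 : 0 < u 1 ∧ u 1 ≤ 1 := hu 1 h1N
  refine ⟨?_, ?_, ?_, ?_⟩
  · simp only [X, if_pos rfl, hC1, Finset.mul_sum]
  · intro i hi
    have hi1 : i ≠ 1 := by
      have := (Finset.mem_Icc.1 hi).1; omega
    simp only [X, if_neg hi1]
    exact hXsc i hi
  · intro i hi k hk
    by_cases h : i = 1
    · simp only [X, if_pos h]
      have hlk := hl k hk
      nlinarith [hu1.1, hu1.2]
    · simp only [X, if_neg h]
      exact hXsl i hi k hk
  · intro k hk
    have hlk := hl k hk
    by_cases hkK : k = K + 1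
    · subst hkK
      rw [hJtop]
      rw [Finset.sum_insert (Finset.notMem_empty 1), Finset.sum_empty]
      simp only [X, if_pos rfl, add_zero]
      have hsplit : ∑ i ∈ Finset.Icc 1 N, u i
          = u 1 + ∑ i ∈ Finset.Icc 1 N \ insert 1 (∅ : Finset ℕ), u i := by
        have : Finset.Icc 1 N \ insert 1 (∅ : Finset ℕ) = (Finset.Icc 1 N).erase 1 := by
          ext x; simp only [Finset.mem_sdiff, Finset.mem_erase, Finset.mem_insert,
            Finset.mem_Icc, Finset.notMem_empty, or_false]; omega
        rw [this, ← Finset.add_sum_erase _ _ h1N]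
      have : u 1 ≤ M - ∑ i ∈ Finset.Icc 1 N \ insert 1 (∅ : Finset ℕ), u i := by
        linarith [hU, hsplit]
      nlinarith
    · have hkmem : k ∈ Finset.Icc 2 K := by
        have := Finset.mem_Icc.1 hk; exact Finset.mem_Icc.2 ⟨this.1, by omega⟩
      have hJk := hJ k hkmem
      have h1J : (1:ℕ) ∉ J k := fun h => by
        have := (Finset.mem_Icc.1 (hJk h)).1; omega
      have h1mem : (1:ℕ) ∈ Finset.Icc 1 N \ J k :=
        Finset.mem_sdiff.2 ⟨h1N, h1J⟩
      have hset : Finset.Icc 1 N \ insert 1 (J k) = (Finset.Icc 1 N \ J k).erase 1 := by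
        ext x
        simp [Finset.mem_sdiff, Finset.mem_erase, and_comm, and_assoc]
        tauto
      have hsum : ∑ i ∈ Finset.Icc 1 N \ J k, u i
          = u 1 + ∑ i ∈ Finset.Icc 1 N \ insert 1 (J k), u i := by
        rw [hset, ← Finset.add_sum_erase _ _ h1mem]
      have hLHS : ∑ i ∈ insert 1 (J k), X i k
          = u 1 * l k + ∑ i ∈ J k, Xs i k := by
        rw [Finset.sum_insert h1J]
        simp only [X, if_pos rfl]
        congr 1
        exact Finset.sum_congr rfl fun i hi => by
          have : i ≠ 1 := fun h => h1J (h ▸ hi)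
          simp [X, this]
      rw [hLHS]
      have hcap := hXscap k hkmem
      have : (M - ∑ i ∈ Finset.Icc 1 N \ insert 1 (J k), u i) * l k
          = (M - ∑ i ∈ Finset.Icc 1 N \ J k, u i) * l k + u 1 * l k := by
        rw [hsum]; ring
      linarith
end

section
/- Let F be an FNRT whose task set T is partitioned into two disjoint sets T' and T'', and let k' ∈ K be a window node such that for every window k ≠ k' it is not the case that both some task of T' and some task of T'' are active in k. Let X be a maximum flow of F. Let F'' be the FNRT with task set T'', the same windows, activity relation, window lengths, and source capacities (restricted to T''), and window capacities Cap'' with Cap'' k = Cap k for k ≠ k' and Cap'' k' = Σ_{i ∈ T''} X i k'. Then the maximum flow value of F'' equals Σ_{i ∈ T''} Σ_{k ∈ K} X i k. -/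
/- A flow network for real-time scheduling (FNRT): task nodes `T`, window
nodes `K`, activity relation `Act`, window lengths `l` (NIP capacities on the
task-to-window edges), source-edge capacities `c`, and window-edge (sink)
capacities `Cap`. -/
structure FNRT where
  T : Finset ℕ
  K : Finset ℕ
  Act : ℕ → ℕ → Prop
  l : ℕ → ℝ
  c : ℕ → ℝ
  Cap : ℕ → ℝ

/- The side conditions on the data of an FNRT: positive window lengths and
nonnegative capacities. -/
def FNRT.Valid (F : FNRT) : Prop :=
  (∀ k ∈ F.K, 0 < F.l k) ∧ (∀ i ∈ F.T, 0 ≤ F.c i) ∧ (∀ k ∈ F.K, 0 ≤ F.Cap k)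

/- A flow of an FNRT: nonnegative, vanishing on inactive pairs, respecting the
no-intra-task-parallelism bounds `l k`, the source capacities `c i` and the
window capacities `Cap k`. -/
def FNRT.IsFlow (F : FNRT) (X : ℕ → ℕ → ℝ) : Prop :=
  (∀ i ∈ F.T, ∀ k ∈ F.K, 0 ≤ X i k) ∧
  (∀ i ∈ F.T, ∀ k ∈ F.K, ¬ F.Act i k → X i k = 0) ∧
  (∀ i ∈ F.T, ∀ k ∈ F.K, X i k ≤ F.l k) ∧
  (∀ i ∈ F.T, ∑ k ∈ F.K, X i k ≤ F.c i) ∧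
  (∀ k ∈ F.K, ∑ i ∈ F.T, X i k ≤ F.Cap k)

/- The value of a flow. -/
def FNRT.value (F : FNRT) (X : ℕ → ℕ → ℝ) : ℝ :=
  ∑ i ∈ F.T, ∑ k ∈ F.K, X i k

/- A complete flow saturates every source edge. -/
def FNRT.IsComplete (F : FNRT) (X : ℕ → ℕ → ℝ) : Prop :=
  ∀ i ∈ F.T, ∑ k ∈ F.K, X i k = F.c i

/- A maximum flow: a flow whose value is largest among all flows. -/
def FNRT.IsMaxFlow (F : FNRT) (X : ℕ → ℕ → ℝ) : Prop :=
  F.IsFlow X ∧ ∀ Y, F.IsFlow Y → F.value Y ≤ F.value X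

/- "The maximum flow value of `F` equals `v`": `v` is attained by some flow
and bounds the value of every flow. -/
def FNRT.maxFlowValueIs (F : FNRT) (v : ℝ) : Prop :=
  (∃ X, F.IsFlow X ∧ F.value X = v) ∧ ∀ X, F.IsFlow X → F.value X ≤ v

/- Lemma 2 (network decomposition), F⁻ half: if the task set splits into T'
and T'' which share only the window node k', then the subnetwork on T'' with
Cap'' k' = Σ_{i ∈ T''} X i k' has maximum flow value Σ_{i ∈ T''} Σ_k X i k. -/
theorem network_decomposition_Fminus
    (F : FNRT) (hF : F.Valid)
    (T' T'' : Finset ℕ) (hdisj : Disjoint T' T'') (hpart : F.T = T' ∪ T'')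
    (k' : ℕ) (hk' : k' ∈ F.K)
    (hsep : ∀ k ∈ F.K, k ≠ k' →
      ¬ ((∃ i ∈ T', F.Act i k) ∧ (∃ i ∈ T'', F.Act i k)))
    (X : ℕ → ℕ → ℝ) (hX : F.IsMaxFlow X) :
    FNRT.maxFlowValueIs
      ⟨T'', F.K, F.Act, F.l, F.c,
        fun k => if k = k' then ∑ i ∈ T'', X i k' else F.Cap k⟩
      (∑ i ∈ T'', ∑ k ∈ F.K, X i k) := by

  obtain ⟨⟨hXnn, hXact, hXl, hXc, hXCap⟩, hXmax⟩ := hX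
  have hsub : ∀ i ∈ T'', i ∈ F.T := by
    intro i hi; rw [hpart]; exact Finset.mem_union_right _ hi
  have hsub' : ∀ i ∈ T', i ∈ F.T := by
    intro i hi; rw [hpart]; exact Finset.mem_union_left _ hi
  have hsplit : ∀ (W : ℕ → ℕ → ℝ) (k : ℕ),
      ∑ i ∈ F.T, W i k = ∑ i ∈ T', W i k + ∑ i ∈ T'', W i k := by
    intro W k; rw [hpart, Finset.sum_union hdisj]
  constructor
  · -- X restricted to T'' is a flow of F''
    refine ⟨X, ⟨?_, ?_, ?_, ?_, ?_⟩, rfl⟩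
    · intro i hi k hk; exact hXnn i (hsub i hi) k hk
    · intro i hi k hk; exact hXact i (hsub i hi) k hk
    · intro i hi k hk; exact hXl i (hsub i hi) k hk
    · intro i hi; exact hXc i (hsub i hi)
    · intro k hk
      by_cases hkk : k = k'
      · subst hkk; simp
      · simp only [if_neg hkk]
        have := hXCap k hk
        rw [hsplit X k] at this
        have h1 : 0 ≤ ∑ i ∈ T', X i k :=
          Finset.sum_nonneg fun i hi => hXnn i (hsub' i hi) k hk
        linarith
  · -- upper bound
    intro Y ⟨hYnn, hYact, hYl, hYc, hYCap⟩
    set Z : ℕ → ℕ → ℝ := fun i k => if i ∈ T' then X i k else Y i k with hZ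
    have hZT' : ∀ i ∈ T', ∀ k, Z i k = X i k := by
      intro i hi k; simp [hZ, hi]
    have hZT'' : ∀ i ∈ T'', ∀ k, Z i k = Y i k := by
      intro i hi k
      have : i ∉ T' := fun h => (Finset.disjoint_left.mp hdisj h) hi
      simp [hZ, this]
    have hZflow : F.IsFlow Z := by
      refine ⟨?_, ?_, ?_, ?_, ?_⟩
      · intro i hi k hk
        rw [hpart, Finset.mem_union] at hi
        rcases hi with hi | hi
        · rw [hZT' i hi]; exact hXnn i (hsub' i hi) k hk
        · rw [hZT'' i hi]; exact hYnn i hi k hk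
      · intro i hi k hk hna
        rw [hpart, Finset.mem_union] at hi
        rcases hi with hi | hi
        · rw [hZT' i hi]; exact hXact i (hsub' i hi) k hk hna
        · rw [hZT'' i hi]; exact hYact i hi k hk hna
      · intro i hi k hk
        rw [hpart, Finset.mem_union] at hi
        rcases hi with hi | hi
        · rw [hZT' i hi]; exact hXl i (hsub' i hi) k hk
        · rw [hZT'' i hi]; exact hYl i hi k hk
      · intro i hi
        rw [hpart, Finset.mem_union] at hi
        rcases hi with hi | hi
        · calc ∑ k ∈ F.K, Z i k = ∑ k ∈ F.K, X i k := by
                exact Finset.sum_congr rfl fun k _ => hZT' i hi k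
            _ ≤ F.c i := hXc i (hsub' i hi)
        · calc ∑ k ∈ F.K, Z i k = ∑ k ∈ F.K, Y i k := by
                exact Finset.sum_congr rfl fun k _ => hZT'' i hi k
            _ ≤ F.c i := hYc i hi
      · intro k hk
        rw [hsplit Z k,
          Finset.sum_congr rfl fun i hi => hZT' i hi k,
          Finset.sum_congr rfl fun i hi => hZT'' i hi k]
        by_cases hkk : k = k'
        · subst hkk
          have h2 : ∑ i ∈ T'', Y i k ≤ ∑ i ∈ T'', X i k := by
            have := hYCap k hk
            simpa using this
          have := hXCap k hk
          rw [hsplit X k] at this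
          linarith
        · rcases not_and_or.mp (hsep k hk hkk) with h | h
          · push_neg at h
            have h1 : ∑ i ∈ T', X i k = 0 :=
              Finset.sum_eq_zero fun i hi => hXact i (hsub' i hi) k hk (h i hi)
            have := hYCap k hk
            simp only [if_neg hkk] at this
            linarith
          · push_neg at h
            have h2 : ∑ i ∈ T'', Y i k = 0 :=
              Finset.sum_eq_zero fun i hi => hYact i hi k hk (h i hi)
            have := hXCap k hk
            rw [hsplit X k] at this
            have h3 : 0 ≤ ∑ i ∈ T'', X i k :=
              Finset.sum_nonneg fun i hi => hXnn i (hsub i hi) k hk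
            linarith
    have hle := hXmax Z hZflow
    unfold FNRT.value at hle
    rw [hpart, Finset.sum_union hdisj, Finset.sum_union hdisj] at hle
    have e1 : ∑ i ∈ T', ∑ k ∈ F.K, Z i k = ∑ i ∈ T', ∑ k ∈ F.K, X i k :=
      Finset.sum_congr rfl fun i hi => Finset.sum_congr rfl fun k _ => hZT' i hi k
    have e2 : ∑ i ∈ T'', ∑ k ∈ F.K, Z i k = ∑ i ∈ T'', ∑ k ∈ F.K, Y i k :=
      Finset.sum_congr rfl fun i hi => Finset.sum_congr rfl fun k _ => hZT'' i hi k
    rw [e1, e2] at hle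
    show ∑ i ∈ T'', ∑ k ∈ F.K, Y i k ≤ _
    linarith
end

section
/- Let F be an FNRT whose task set T is partitioned into two disjoint sets T' and T'', and let k' ∈ K be a window node such that for every window k ≠ k' it is not the case that both some task of T' and some task of T'' are active in k. Let X be a maximum flow of F. Let F' be the FNRT with task set T', the same windows, activity relation, window lengths, and source capacities (restricted to T'), and window capacities Cap' with Cap' k = Cap k for k ≠ k' and Cap' k' = Cap k' − Σ_{i ∈ T''} X i k'. Then the maximum flow value of F' equals Σ_{i ∈ T'} Σ_{k ∈ K} X i k. -/
/- Lemma 2 (network decomposition), F⁺ half: if the task set splits into T'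
and T'' which share only the window node k', then the subnetwork on T' with
Cap' k' = Cap k' − Σ_{i ∈ T''} X i k' has maximum flow value
Σ_{i ∈ T'} Σ_k X i k. -/
theorem network_decomposition_Fplus
    (F : FNRT) (hF : F.Valid)
    (T' T'' : Finset ℕ) (hdisj : Disjoint T' T'') (hpart : F.T = T' ∪ T'')
    (k' : ℕ) (hk' : k' ∈ F.K)
    (hsep : ∀ k ∈ F.K, k ≠ k' →
      ¬ ((∃ i ∈ T', F.Act i k) ∧ (∃ i ∈ T'', F.Act i k)))
    (X : ℕ → ℕ → ℝ) (hX : F.IsMaxFlow X) :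
    FNRT.maxFlowValueIs
      ⟨T', F.K, F.Act, F.l, F.c,
        fun k => if k = k' then F.Cap k' - ∑ i ∈ T'', X i k' else F.Cap k⟩
      (∑ i ∈ T', ∑ k ∈ F.K, X i k) := by

  obtain ⟨⟨hpos, hzero, hl, hc, hCap⟩, hmax⟩ := hX
  have hT'sub : ∀ i ∈ T', i ∈ F.T := fun i hi => hpart ▸ Finset.mem_union_left _ hi
  have hT''sub : ∀ i ∈ T'', i ∈ F.T := fun i hi => hpart ▸ Finset.mem_union_right _ hi
  constructor
  · refine ⟨X, ⟨fun i hi k hk => hpos i (hT'sub i hi) k hk,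
      fun i hi k hk => hzero i (hT'sub i hi) k hk,
      fun i hi k hk => hl i (hT'sub i hi) k hk,
      fun i hi => hc i (hT'sub i hi), ?_⟩, rfl⟩
    intro k hk
    have hc0 := hCap k hk
    rw [hpart, Finset.sum_union hdisj] at hc0
    dsimp only
    split_ifs with h
    · subst h; linarith
    · have h2 : 0 ≤ ∑ i ∈ T'', X i k :=
        Finset.sum_nonneg fun i hi => hpos i (hT''sub i hi) k hk
      linarith
  · intro Y hY
    obtain ⟨hYpos, hYzero, hYl, hYc, hYCap⟩ := hY
    set Z : ℕ → ℕ → ℝ := fun i k => if i ∈ T' then Y i k else X i k with hZdef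
    have hZT' : ∀ i ∈ T', ∀ k, Z i k = Y i k := by
      intro i hi k; simp [hZdef, hi]
    have hZT'' : ∀ i ∈ T'', ∀ k, Z i k = X i k := by
      intro i hi k
      have : i ∉ T' := fun h => (Finset.disjoint_left.mp hdisj h hi)
      simp [hZdef, this]
    have hcase : ∀ i ∈ F.T, i ∈ T' ∨ i ∈ T'' := by
      intro i hi; rw [hpart] at hi; exact Finset.mem_union.mp hi
    have hZflow : F.IsFlow Z := by
      refine ⟨?_, ?_, ?_, ?_, ?_⟩
      · intro i hi k hk
        rcases hcase i hi with h | h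
        · rw [hZT' i h]; exact hYpos i h k hk
        · rw [hZT'' i h]; exact hpos i hi k hk
      · intro i hi k hk hna
        rcases hcase i hi with h | h
        · rw [hZT' i h]; exact hYzero i h k hk hna
        · rw [hZT'' i h]; exact hzero i hi k hk hna
      · intro i hi k hk
        rcases hcase i hi with h | h
        · rw [hZT' i h]; exact hYl i h k hk
        · rw [hZT'' i h]; exact hl i hi k hk
      · intro i hi
        rcases hcase i hi with h | h
        · calc ∑ k ∈ F.K, Z i k = ∑ k ∈ F.K, Y i k :=
              Finset.sum_congr rfl (fun k _ => hZT' i h k)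
            _ ≤ F.c i := hYc i h
        · calc ∑ k ∈ F.K, Z i k = ∑ k ∈ F.K, X i k :=
              Finset.sum_congr rfl (fun k _ => hZT'' i h k)
            _ ≤ F.c i := hc i hi
      · intro k hk
        have hsplit : ∑ i ∈ F.T, Z i k = ∑ i ∈ T', Y i k + ∑ i ∈ T'', X i k := by
          rw [hpart, Finset.sum_union hdisj]
          congr 1
          · exact Finset.sum_congr rfl (fun i hi => hZT' i hi k)
          · exact Finset.sum_congr rfl (fun i hi => hZT'' i hi k)
        rw [hsplit]
        by_cases hkk : k = k'
        · subst hkk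
          have h1 := hYCap k hk
          dsimp only at h1
          rw [if_pos rfl] at h1
          linarith
        · rcases not_and_or.mp (hsep k hk hkk) with h | h
          · push_neg at h
            have hY0 : ∑ i ∈ T', Y i k = 0 :=
              Finset.sum_eq_zero fun i hi => hYzero i hi k hk (h i hi)
            have hX0 := hCap k hk
            rw [hpart, Finset.sum_union hdisj] at hX0
            have hXnn : 0 ≤ ∑ i ∈ T', X i k :=
              Finset.sum_nonneg fun i hi => hpos i (hT'sub i hi) k hk
            linarith
          · push_neg at h
            have hX0 : ∑ i ∈ T'', X i k = 0 :=
              Finset.sum_eq_zero fun i hi => hzero i (hT''sub i hi) k hk (h i hi)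
            have h1 := hYCap k hk
            dsimp only at h1
            rw [if_neg hkk] at h1
            linarith
    have hle := hmax Z hZflow
    have hvZ : F.value Z = (∑ i ∈ T', ∑ k ∈ F.K, Y i k) + ∑ i ∈ T'', ∑ k ∈ F.K, X i k := by
      unfold FNRT.value
      rw [hpart, Finset.sum_union hdisj]
      congr 1
      · exact Finset.sum_congr rfl fun i hi => Finset.sum_congr rfl fun k _ => hZT' i hi k
      · exact Finset.sum_congr rfl fun i hi => Finset.sum_congr rfl fun k _ => hZT'' i hi k
    have hvX : F.value X = (∑ i ∈ T', ∑ k ∈ F.K, X i k) + ∑ i ∈ T'', ∑ k ∈ F.K, X i k := by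
      unfold FNRT.value
      rw [hpart, Finset.sum_union hdisj]
    rw [hvZ, hvX] at hle
    have : (∑ i ∈ T', ∑ k ∈ F.K, Y i k) ≤ ∑ i ∈ T', ∑ k ∈ F.K, X i k := by linarith
    exact this
end

section
/- Let F be an FNRT whose task set T is partitioned into two disjoint sets T' and T'', and let k' ∈ K be a window node such that for every window k ≠ k' it is not the case that both some task of T' and some task of T'' are active in k. Let X be any flow of F, and let F' be the FNRT with task set T', the same windows, activity relation, window lengths, and source capacities (restricted to T'), and window capacities Cap' with Cap' k = Cap k for k ≠ k' and Cap' k' = Cap k' − Σ_{i ∈ T''} X i k'. Then for every flow Y of F', the function Z : T × K → ℝ defined by Z i k = Y i k for i ∈ T' and Z i k = X i k for i ∈ T'' is a flow of F, and its value equals the value of Y plus Σ_{i ∈ T''} Σ_{k ∈ K} X i k. -/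
/- Gluing step in the proof of Lemma 2: a flow Y of the split subnetwork F'
on T' recombines with the restriction of X to T'' into a flow of F whose
value is the value of Y plus Σ_{i ∈ T''} Σ_k X i k. -/
theorem network_decomposition_gluing
    (F : FNRT) (hF : F.Valid)
    (T' T'' : Finset ℕ) (hdisj : Disjoint T' T'') (hpart : F.T = T' ∪ T'')
    (k' : ℕ) (hk' : k' ∈ F.K)
    (hsep : ∀ k ∈ F.K, k ≠ k' →
      ¬ ((∃ i ∈ T', F.Act i k) ∧ (∃ i ∈ T'', F.Act i k)))
    (X : ℕ → ℕ → ℝ) (hX : F.IsFlow X) :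
    ∀ Y : ℕ → ℕ → ℝ,
      FNRT.IsFlow
        ⟨T', F.K, F.Act, F.l, F.c,
          fun k => if k = k' then F.Cap k' - ∑ i ∈ T'', X i k' else F.Cap k⟩
        Y →
      F.IsFlow (fun i k => if i ∈ T' then Y i k else X i k) ∧
      F.value (fun i k => if i ∈ T' then Y i k else X i k)
        = (∑ i ∈ T', ∑ k ∈ F.K, Y i k) + ∑ i ∈ T'', ∑ k ∈ F.K, X i k := by
  intro Y hY
  obtain ⟨hY0, hYact, hYl, hYc, hYCap⟩ := hY
  obtain ⟨hX0, hXact, hXl, hXc, hXCap⟩ := hX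
  have hmem : ∀ i ∈ F.T, i ∈ T' ∨ (i ∉ T' ∧ i ∈ T'') := by
    intro i hi
    rw [hpart, Finset.mem_union] at hi
    rcases hi with h | h
    · exact Or.inl h
    · exact Or.inr ⟨fun h' => (Finset.disjoint_left.mp hdisj h' h), h⟩
  have hT' : ∀ i ∈ T', i ∈ F.T := fun i hi => by
    rw [hpart]; exact Finset.mem_union_left _ hi
  have hT'' : ∀ i ∈ T'', i ∈ F.T := fun i hi => by
    rw [hpart]; exact Finset.mem_union_right _ hi
  have hsplit : ∀ (W : ℕ → ℕ → ℝ) (k : ℕ),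
      ∑ i ∈ F.T, W i k = ∑ i ∈ T', W i k + ∑ i ∈ T'', W i k := by
    intro W k; rw [hpart, Finset.sum_union hdisj]
  have hZT' : ∀ i ∈ T', ∀ k, (if i ∈ T' then Y i k else X i k) = Y i k := by
    intro i hi k; simp [hi]
  have hZT'' : ∀ i ∈ T'', ∀ k, (if i ∈ T' then Y i k else X i k) = X i k := by
    intro i hi k
    have : i ∉ T' := fun h => Finset.disjoint_left.mp hdisj h hi
    simp [this]
  refine ⟨⟨?_, ?_, ?_, ?_, ?_⟩, ?_⟩
  · intro i hi k hk
    simp only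
    rcases hmem i hi with h | ⟨h1, h2⟩
    · rw [hZT' i h k]; exact hY0 i h k hk
    · simp only [h1, if_false]; exact hX0 i (hT'' i h2) k hk
  · intro i hi k hk hact
    simp only
    rcases hmem i hi with h | ⟨h1, h2⟩
    · rw [hZT' i h k]; exact hYact i h k hk hact
    · simp only [h1, if_false]; exact hXact i (hT'' i h2) k hk hact
  · intro i hi k hk
    simp only
    rcases hmem i hi with h | ⟨h1, h2⟩
    · rw [hZT' i h k]; exact hYl i h k hk
    · simp only [h1, if_false]; exact hXl i (hT'' i h2) k hk
  · intro i hi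
    simp only
    rcases hmem i hi with h | ⟨h1, h2⟩
    · calc ∑ k ∈ F.K, (if i ∈ T' then Y i k else X i k)
          = ∑ k ∈ F.K, Y i k := Finset.sum_congr rfl (fun k _ => hZT' i h k)
        _ ≤ F.c i := hYc i h
    · calc ∑ k ∈ F.K, (if i ∈ T' then Y i k else X i k)
          = ∑ k ∈ F.K, X i k := Finset.sum_congr rfl (fun k _ => hZT'' i h2 k)
        _ ≤ F.c i := hXc i (hT'' i h2)
  · intro k hk
    simp only
    have hsum : ∑ i ∈ F.T, (if i ∈ T' then Y i k else X i k)
        = ∑ i ∈ T', Y i k + ∑ i ∈ T'', X i k := by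
      rw [hpart, Finset.sum_union hdisj]
      congr 1
      · exact Finset.sum_congr rfl (fun i hi => hZT' i hi k)
      · exact Finset.sum_congr rfl (fun i hi => hZT'' i hi k)
    rw [hsum]
    by_cases hkk : k = k'
    · subst hkk
      have := hYCap k hk
      dsimp only at this
      rw [if_pos rfl] at this
      linarith
    · rcases not_and_or.mp (hsep k hk hkk) with h | h
      · push_neg at h
        have hY0k : ∑ i ∈ T', Y i k = 0 :=
          Finset.sum_eq_zero (fun i hi => hYact i hi k hk (h i hi))
        have hX'nn : 0 ≤ ∑ i ∈ T', X i k :=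
          Finset.sum_nonneg (fun i hi => hX0 i (hT' i hi) k hk)
        have := hXCap k hk
        rw [hsplit] at this
        linarith
      · push_neg at h
        have hX0k : ∑ i ∈ T'', X i k = 0 :=
          Finset.sum_eq_zero (fun i hi => hXact i (hT'' i hi) k hk (h i hi))
        have := hYCap k hk
        dsimp only at this
        rw [if_neg hkk] at this
        linarith
  · unfold FNRT.value
    rw [hpart, Finset.sum_union hdisj]
    congr 1
    · exact Finset.sum_congr rfl (fun i hi => Finset.sum_congr rfl (fun k _ => hZT' i hi k))
    · exact Finset.sum_congr rfl (fun i hi => Finset.sum_congr rfl (fun k _ => hZT'' i hi k))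
end

section
/- Let F be an FNRT, let k₁ ∈ K be a window node, and let X be a maximum flow of F. Let F' be the FNRT with the same task set T, with window set K ∖ {k₁}, with activity relation, window lengths, and window capacities restricted accordingly, and with source capacities c' i = c i − X i k₁ for every i ∈ T (these are nonnegative since Σ_{k} X i k ≤ c i). Then the maximum flow value of F' equals the value of X minus Σ_{i ∈ T} X i k₁. -/
/- Lemma 3 (node removal): removing a window node k₁ and decreasing each
source capacity by the flow X i k₁ that node received yields a network whose
maximum flow value is the value of X minus Σ_{i ∈ T} X i k₁. -/
theorem node_removal
    (F : FNRT) (hF : F.Valid) (k₁ : ℕ) (hk₁ : k₁ ∈ F.K)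
    (X : ℕ → ℕ → ℝ) (hX : F.IsMaxFlow X) :
    FNRT.maxFlowValueIs
      ⟨F.T, F.K.erase k₁, F.Act, F.l, fun i => F.c i - X i k₁, F.Cap⟩
      (F.value X - ∑ i ∈ F.T, X i k₁) := by
  obtain ⟨⟨hnn, hact, hl, hc, hCap⟩, hmax⟩ := hX
  set F' : FNRT := ⟨F.T, F.K.erase k₁, F.Act, F.l, fun i => F.c i - X i k₁, F.Cap⟩
  constructor
  · refine ⟨X, ⟨?_, ?_, ?_, ?_, ?_⟩, ?_⟩
    · intro i hi k hk; exact hnn i hi k (Finset.mem_of_mem_erase hk)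
    · intro i hi k hk; exact hact i hi k (Finset.mem_of_mem_erase hk)
    · intro i hi k hk; exact hl i hi k (Finset.mem_of_mem_erase hk)
    · intro i hi
      have := hc i hi
      have h2 : ∑ k ∈ F.K.erase k₁, X i k + X i k₁ = ∑ k ∈ F.K, X i k :=
        Finset.sum_erase_add _ _ hk₁
      show ∑ k ∈ F.K.erase k₁, X i k ≤ F.c i - X i k₁
      linarith
    · intro k hk; exact hCap k (Finset.mem_of_mem_erase hk)
    · show ∑ i ∈ F.T, ∑ k ∈ F.K.erase k₁, X i k = F.value X - ∑ i ∈ F.T, X i k₁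
      unfold FNRT.value
      rw [← Finset.sum_sub_distrib]
      refine Finset.sum_congr rfl fun i _ => ?_
      have := Finset.sum_erase_add F.K (X i) hk₁
      linarith
  · intro Y hY
    obtain ⟨hnn', hact', hl', hc', hCap'⟩ := hY
    set Z : ℕ → ℕ → ℝ := fun i k => if k = k₁ then X i k₁ else Y i k with hZ
    have hmem : ∀ k ∈ F.K, k ≠ k₁ → k ∈ F.K.erase k₁ := fun k hk h =>
      Finset.mem_erase.mpr ⟨h, hk⟩
    have hZflow : F.IsFlow Z := by
      refine ⟨?_, ?_, ?_, ?_, ?_⟩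
      · intro i hi k hk
        by_cases h : k = k₁
        · simp [hZ, h]; exact hnn i hi k₁ hk₁
        · simpa [hZ, h] using hnn' i hi k (hmem k hk h)
      · intro i hi k hk hA
        by_cases h : k = k₁
        · subst h; simpa [hZ] using hact i hi k hk₁ hA
        · simpa [hZ, h] using hact' i hi k (hmem k hk h) hA
      · intro i hi k hk
        by_cases h : k = k₁
        · subst h; simpa [hZ] using hl i hi k hk₁
        · simpa [hZ, h] using hl' i hi k (hmem k hk h)
      · intro i hi
        have h1 : ∑ k ∈ F.K.erase k₁, Z i k = ∑ k ∈ F.K.erase k₁, Y i k := by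
          refine Finset.sum_congr rfl fun k hk => ?_
          simp [hZ, (Finset.mem_erase.mp hk).1]
        have h2 : ∑ k ∈ F.K.erase k₁, Z i k + Z i k₁ = ∑ k ∈ F.K, Z i k :=
          Finset.sum_erase_add _ _ hk₁
        have h3 := hc' i hi
        simp only [hZ, if_pos rfl] at h2
        show ∑ k ∈ F.K, Z i k ≤ F.c i
        have h4 : ∑ k ∈ F.K.erase k₁, Y i k ≤ F.c i - X i k₁ := h3
        linarith
      · intro k hk
        by_cases h : k = k₁
        · subst h
          have : ∑ i ∈ F.T, Z i k = ∑ i ∈ F.T, X i k := by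
            refine Finset.sum_congr rfl fun i _ => by simp [hZ]
          rw [this]; exact hCap k hk₁
        · have : ∑ i ∈ F.T, Z i k = ∑ i ∈ F.T, Y i k := by
            refine Finset.sum_congr rfl fun i _ => by simp [hZ, h]
          rw [this]; exact hCap' k (hmem k hk h)
    have hZval : F.value Z = (∑ i ∈ F.T, ∑ k ∈ F.K.erase k₁, Y i k) + ∑ i ∈ F.T, X i k₁ := by
      unfold FNRT.value
      rw [← Finset.sum_add_distrib]
      refine Finset.sum_congr rfl fun i _ => ?_
      have h1 : ∑ k ∈ F.K.erase k₁, Z i k = ∑ k ∈ F.K.erase k₁, Y i k := by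
        refine Finset.sum_congr rfl fun k hk => ?_
        simp [hZ, (Finset.mem_erase.mp hk).1]
      have h2 : ∑ k ∈ F.K.erase k₁, Z i k + Z i k₁ = ∑ k ∈ F.K, Z i k :=
        Finset.sum_erase_add _ _ hk₁
      simp only [hZ, if_pos rfl] at h2
      linarith
    have := hmax Z hZflow
    show ∑ i ∈ F.T, ∑ k ∈ F.K.erase k₁, Y i k ≤ F.value X - ∑ i ∈ F.T, X i k₁
    linarith
end

section
/- Let F be an FNRT, let k₁ ∈ K be a window node, and let X be any flow of F. Let F' be the FNRT with the same task set T, with window set K ∖ {k₁}, with activity relation, window lengths, and window capacities restricted accordingly, and with source capacities c' i = c i − X i k₁ for every i ∈ T. Then for every flow Y of F', the function Z : T × K → ℝ defined by Z i k₁ = X i k₁ and Z i k = Y i k for k ≠ k₁ is a flow of F, and its value equals the value of Y plus Σ_{i ∈ T} X i k₁. -/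
/- Re-insertion step in the proof of Lemma 3 (node removal): any flow Y of the
reduced network F' extends, by the original flow into the removed window node
k₁, to a flow of F whose value is the value of Y plus Σ_{i ∈ T} X i k₁. -/
theorem node_removal_reinsertion
    (F : FNRT) (hF : F.Valid) (k₁ : ℕ) (hk₁ : k₁ ∈ F.K)
    (X : ℕ → ℕ → ℝ) (hX : F.IsFlow X) :
    ∀ Y : ℕ → ℕ → ℝ,
      FNRT.IsFlow
        ⟨F.T, F.K.erase k₁, F.Act, F.l, fun i => F.c i - X i k₁, F.Cap⟩ Y →
      F.IsFlow (fun i k => if k = k₁ then X i k₁ else Y i k) ∧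
      F.value (fun i k => if k = k₁ then X i k₁ else Y i k)
        = (∑ i ∈ F.T, ∑ k ∈ F.K.erase k₁, Y i k) + ∑ i ∈ F.T, X i k₁ := by
  intro Y hY
  obtain ⟨hX0, hXact, hXl, hXc, hXCap⟩ := hX
  obtain ⟨hY0, hYact, hYl, hYc, hYCap⟩ := hY
  have hsum : ∀ i, ∑ k ∈ F.K, (if k = k₁ then X i k₁ else Y i k)
      = X i k₁ + ∑ k ∈ F.K.erase k₁, Y i k := by
    intro i
    rw [← Finset.add_sum_erase F.K _ hk₁]
    simp only [if_pos rfl]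
    congr 1
    exact Finset.sum_congr rfl fun k hk => if_neg (Finset.ne_of_mem_erase hk)
  refine ⟨⟨?_, ?_, ?_, ?_, ?_⟩, ?_⟩
  · intro i hi k hk
    by_cases h : k = k₁
    · simpa [h] using hX0 i hi k₁ hk₁
    · simpa [h] using hY0 i hi k (Finset.mem_erase.mpr ⟨h, hk⟩)
  · intro i hi k hk hact
    by_cases h : k = k₁
    · subst h; simpa using hXact i hi k hk hact
    · simpa [h] using hYact i hi k (Finset.mem_erase.mpr ⟨h, hk⟩) hact
  · intro i hi k hk
    by_cases h : k = k₁
    · subst h; simpa using hXl i hi k hk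
    · simpa [h] using hYl i hi k (Finset.mem_erase.mpr ⟨h, hk⟩)
  · intro i hi
    rw [hsum i]
    have := hYc i hi
    simp only at this
    linarith
  · intro k hk
    by_cases h : k = k₁
    · subst h; simpa using hXCap k hk
    · have := hYCap k (Finset.mem_erase.mpr ⟨h, hk⟩)
      simpa [h] using this
  · unfold FNRT.value
    simp only [hsum]
    rw [Finset.sum_add_distrib, add_comm]
end

section
/- Let F⁺ and F⁻ be two FNRTs with disjoint task sets T⁺ and T⁻ and with window sets K⁺ and K⁻ satisfying K⁺ ∩ K⁻ = {k'}, where both networks assign the same length l k' to the shared window node k'. Suppose X⁺ is a complete flow of F⁺ and X⁻ is a complete flow of F⁻. Let F be the merged FNRT with task set T⁺ ∪ T⁻, window set K⁺ ∪ K⁻, activity relation, window lengths, and source capacities inherited from F⁺ and F⁻, and window capacities inherited except Cap k' = Cap⁺ k' + Cap⁻ k'. Then the function Z equal to X⁺ on T⁺ × K⁺, equal to X⁻ on T⁻ × K⁻, and 0 elsewhere, is a complete maximum flow of F, and its value is Σ_{i ∈ T⁺} c⁺ i + Σ_{i ∈ T⁻} c⁻ i. -/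
/- Lemma 4 (network composition): merging two FNRTs with disjoint task sets at
their unique shared window node k' (with the merged sink-edge capacity
Cap⁺ k' + Cap⁻ k') combines complete flows X⁺ and X⁻ into a complete maximum
flow of the merged network, of value Σ_{T⁺} c⁺ i + Σ_{T⁻} c⁻ i. -/
theorem network_composition
    (Fp Fm : FNRT) (hFp : Fp.Valid) (hFm : Fm.Valid)
    (hT : Disjoint Fp.T Fm.T)
    (k' : ℕ) (hK : Fp.K ∩ Fm.K = {k'})
    (hl : Fp.l k' = Fm.l k')
    (Xp : ℕ → ℕ → ℝ) (hXp : Fp.IsFlow Xp) (hXpc : Fp.IsComplete Xp)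
    (Xm : ℕ → ℕ → ℝ) (hXm : Fm.IsFlow Xm) (hXmc : Fm.IsComplete Xm) :
    (let F : FNRT :=
      ⟨Fp.T ∪ Fm.T, Fp.K ∪ Fm.K,
        fun i k => (i ∈ Fp.T ∧ Fp.Act i k) ∨ (i ∈ Fm.T ∧ Fm.Act i k),
        fun k => if k ∈ Fp.K then Fp.l k else Fm.l k,
        fun i => if i ∈ Fp.T then Fp.c i else Fm.c i,
        fun k => if k = k' then Fp.Cap k' + Fm.Cap k'
          else if k ∈ Fp.K then Fp.Cap k else Fm.Cap k⟩
     let Z : ℕ → ℕ → ℝ := fun i k =>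
      if i ∈ Fp.T ∧ k ∈ Fp.K then Xp i k
      else if i ∈ Fm.T ∧ k ∈ Fm.K then Xm i k else 0
     F.IsComplete Z ∧ F.IsMaxFlow Z ∧
       F.value Z = (∑ i ∈ Fp.T, Fp.c i) + ∑ i ∈ Fm.T, Fm.c i) := by
  intro F Z
  have hmp : ∀ i ∈ Fm.T, i ∉ Fp.T := fun i hi hip => Finset.disjoint_left.mp hT hip hi
  have hpm : ∀ i ∈ Fp.T, i ∉ Fm.T := fun i hi => Finset.disjoint_left.mp hT hi
  have hk'p : k' ∈ Fp.K := by
    have h : k' ∈ Fp.K ∩ Fm.K := by rw [hK]; exact Finset.mem_singleton_self k'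
    exact (Finset.mem_inter.mp h).1
  have hk'm : k' ∈ Fm.K := by
    have h : k' ∈ Fp.K ∩ Fm.K := by rw [hK]; exact Finset.mem_singleton_self k'
    exact (Finset.mem_inter.mp h).2
  have hint : ∀ k, k ∈ Fp.K → k ∈ Fm.K → k = k' := by
    intro k h1 h2
    have h : k ∈ Fp.K ∩ Fm.K := Finset.mem_inter.mpr ⟨h1, h2⟩
    rw [hK] at h; exact Finset.mem_singleton.mp h
  -- row sums
  have hZp : ∀ i ∈ Fp.T, ∀ k, Z i k = if k ∈ Fp.K then Xp i k else 0 := by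
    intro i hi k
    simp only [Z]
    by_cases hk : k ∈ Fp.K <;> simp [hi, hk, hpm i hi]
  have hZm : ∀ i ∈ Fm.T, ∀ k, Z i k = if k ∈ Fm.K then Xm i k else 0 := by
    intro i hi k
    simp only [Z]
    by_cases hk : k ∈ Fm.K <;> simp [hi, hk, hmp i hi]
  have hrowp : ∀ i ∈ Fp.T, ∑ k ∈ Fp.K ∪ Fm.K, Z i k = Fp.c i := by
    intro i hi
    rw [Finset.sum_congr rfl (fun k _ => hZp i hi k), Finset.sum_ite_mem,
      Finset.union_inter_cancel_left]
    exact hXpc i hi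
  have hrowm : ∀ i ∈ Fm.T, ∑ k ∈ Fp.K ∪ Fm.K, Z i k = Fm.c i := by
    intro i hi
    rw [Finset.sum_congr rfl (fun k _ => hZm i hi k), Finset.sum_ite_mem,
      Finset.union_inter_cancel_right]
    exact hXmc i hi
  have hcomplete : F.IsComplete Z := by
    intro i hi
    rcases Finset.mem_union.mp hi with hi | hi
    · show _ = if i ∈ Fp.T then Fp.c i else Fm.c i
      rw [if_pos hi]; exact hrowp i hi
    · show _ = if i ∈ Fp.T then Fp.c i else Fm.c i
      rw [if_neg (hmp i hi)]; exact hrowm i hi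
  have hval : F.value Z = (∑ i ∈ Fp.T, Fp.c i) + ∑ i ∈ Fm.T, Fm.c i := by
    show ∑ i ∈ Fp.T ∪ Fm.T, ∑ k ∈ Fp.K ∪ Fm.K, Z i k = _
    rw [Finset.sum_union hT, Finset.sum_congr rfl hrowp, Finset.sum_congr rfl hrowm]
  -- column sums
  have hcolp : ∀ k, ∑ i ∈ Fp.T, Z i k = if k ∈ Fp.K then ∑ i ∈ Fp.T, Xp i k else 0 := by
    intro k
    rw [Finset.sum_congr rfl (fun i hi => hZp i hi k)]
    by_cases hk : k ∈ Fp.K <;> simp [hk]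
  have hcolm : ∀ k, ∑ i ∈ Fm.T, Z i k = if k ∈ Fm.K then ∑ i ∈ Fm.T, Xm i k else 0 := by
    intro k
    rw [Finset.sum_congr rfl (fun i hi => hZm i hi k)]
    by_cases hk : k ∈ Fm.K <;> simp [hk]
  have hflow : F.IsFlow Z := by
    refine ⟨?_, ?_, ?_, ?_, ?_⟩
    · intro i _ k _
      show (0:ℝ) ≤ Z i k
      simp only [Z]
      split_ifs with h1 h2
      · exact hXp.1 i h1.1 k h1.2
      · exact hXm.1 i h2.1 k h2.2
      · exact le_refl 0
    · intro i _ k _ hact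
      show Z i k = 0
      simp only [Z]
      split_ifs with h1 h2
      · exact hXp.2.1 i h1.1 k h1.2 (fun ha => hact (Or.inl ⟨h1.1, ha⟩))
      · exact hXm.2.1 i h2.1 k h2.2 (fun ha => hact (Or.inr ⟨h2.1, ha⟩))
      · rfl
    · intro i hi k hk
      show Z i k ≤ if k ∈ Fp.K then Fp.l k else Fm.l k
      have hlpos : 0 < if k ∈ Fp.K then Fp.l k else Fm.l k := by
        by_cases hp : k ∈ Fp.K
        · rw [if_pos hp]; exact hFp.1 k hp
        · rw [if_neg hp]
          exact hFm.1 k ((Finset.mem_union.mp hk).resolve_left hp)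
      simp only [Z]
      by_cases h1 : i ∈ Fp.T ∧ k ∈ Fp.K
      · rw [if_pos h1, if_pos h1.2]
        exact hXp.2.2.1 i h1.1 k h1.2
      · rw [if_neg h1]
        by_cases h2 : i ∈ Fm.T ∧ k ∈ Fm.K
        · rw [if_pos h2]
          by_cases hp : k ∈ Fp.K
          · have hk' := hint k hp h2.2
            subst hk'
            rw [if_pos hp, hl]
            exact hXm.2.2.1 i h2.1 _ h2.2
          · rw [if_neg hp]
            exact hXm.2.2.1 i h2.1 k h2.2
        · rw [if_neg h2]
          exact le_of_lt hlpos
    · intro i hi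
      exact le_of_eq (hcomplete i hi)
    · intro k hk
      show ∑ i ∈ Fp.T ∪ Fm.T, Z i k ≤
        if k = k' then Fp.Cap k' + Fm.Cap k' else if k ∈ Fp.K then Fp.Cap k else Fm.Cap k
      rw [Finset.sum_union hT, hcolp k, hcolm k]
      by_cases hkk : k = k'
      · subst hkk
        rw [if_pos hk'p, if_pos hk'm, if_pos rfl]
        exact add_le_add (hXp.2.2.2.2 k hk'p) (hXm.2.2.2.2 k hk'm)
      · rw [if_neg hkk]
        by_cases hp : k ∈ Fp.K
        · have hm : k ∉ Fm.K := fun hm => hkk (hint k hp hm)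
          rw [if_pos hp, if_pos hp, if_neg hm, add_zero]
          exact hXp.2.2.2.2 k hp
        · have hm : k ∈ Fm.K := (Finset.mem_union.mp hk).resolve_left hp
          rw [if_neg hp, if_neg hp, if_pos hm, zero_add]
          exact hXm.2.2.2.2 k hm
  refine ⟨hcomplete, ⟨hflow, ?_⟩, hval⟩
  intro Y hY
  rw [hval]
  calc F.value Y ≤ ∑ i ∈ Fp.T ∪ Fm.T, (if i ∈ Fp.T then Fp.c i else Fm.c i) :=
        Finset.sum_le_sum (fun i hi => hY.2.2.2.1 i hi)
    _ = (∑ i ∈ Fp.T, Fp.c i) + ∑ i ∈ Fm.T, Fm.c i := by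
        rw [Finset.sum_union hT]
        congr 1
        · exact Finset.sum_congr rfl (fun i hi => if_pos hi)
        · exact Finset.sum_congr rfl (fun i hi => if_neg (hmp i hi))
end

section
/- Let M > 0 be real and let F be an FNRT whose window capacities satisfy Cap k = M · l k for every k ∈ K. Fix a window node k₁ ∈ K, let A = {i ∈ T : (i,k₁) ∈ Act} be the tasks active in window k₁ and B = T ∖ A, and let X be a complete flow of F. Let Fᵃ be the FNRT with task set A, window set K_A = {k ∈ K : ∃ i ∈ A, (i,k) ∈ Act}, activity relation, window lengths, and source capacities restricted from F, and window capacities Capᵃ k = M · l k − Σ_{i ∈ B} X i k. Then for every complete flow Y of Fᵃ, the FNRT F' with task set T, window set K ∖ {k₁}, activity relation, window lengths restricted from F, window capacities Cap k = M · l k, and source capacities c' i = c i − Y i k₁ for i ∈ A and c' i = c i for i ∈ B, has a complete flow, namely Z defined by Z i k = Y i k for i ∈ A and Z i k = X i k for i ∈ B (for k ∈ K ∖ {k₁}). -/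
/- Induction step of Theorem 3 (RT-optimality of fn-EDF on the discrete-time
model): given a complete flow X of the whole-hyper-period FNRT F (with window
capacities M · l k), and any complete flow Y of the subnetwork Fᵃ of the tasks
A active in the first window k₁ (with capacities M · l k − Σ_{i ∈ B} X i k),
the residual network F' (k₁ removed, source capacities of A reduced by their
first-window allocation Y i k₁) has a complete flow, namely Y on A glued with
X on B = T ∖ A. -/
theorem fnEDF_induction_step
    (M : ℝ) (hM : 0 < M)
    (F : FNRT) (hF : F.Valid)
    (hCap : ∀ k ∈ F.K, F.Cap k = M * F.l k)
    (k₁ : ℕ) (hk₁ : k₁ ∈ F.K)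
    (A B : Finset ℕ)
    (hA : ∀ i, i ∈ A ↔ i ∈ F.T ∧ F.Act i k₁)
    (hB : B = F.T \ A)
    (KA : Finset ℕ)
    (hKA : ∀ k, k ∈ KA ↔ k ∈ F.K ∧ ∃ i ∈ A, F.Act i k)
    (X : ℕ → ℕ → ℝ) (hX : F.IsFlow X) (hXc : F.IsComplete X)
    (Y : ℕ → ℕ → ℝ)
    (hY : FNRT.IsFlow
      ⟨A, KA, F.Act, F.l, F.c, fun k => M * F.l k - ∑ i ∈ B, X i k⟩ Y)
    (hYc : FNRT.IsComplete
      ⟨A, KA, F.Act, F.l, F.c, fun k => M * F.l k - ∑ i ∈ B, X i k⟩ Y)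
    (hY0 : ∀ i k, k ∉ KA → Y i k = 0) :
    FNRT.IsFlow
      ⟨F.T, F.K.erase k₁, F.Act, F.l,
        (fun i => if i ∈ A then F.c i - Y i k₁ else F.c i), F.Cap⟩
      (fun i k => if i ∈ A then Y i k else X i k) ∧
    FNRT.IsComplete
      ⟨F.T, F.K.erase k₁, F.Act, F.l,
        (fun i => if i ∈ A then F.c i - Y i k₁ else F.c i), F.Cap⟩
      (fun i k => if i ∈ A then Y i k else X i k) := by

  obtain ⟨hl, hc0, hCap0⟩ := hF
  obtain ⟨hX1, hX2, hX3, hX4, hX5⟩ := hX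
  obtain ⟨hY1, hY2, hY3, hY4, hY5⟩ := hY
  have hAsub : A ⊆ F.T := fun i hi => ((hA i).1 hi).1
  have hKAsub : KA ⊆ F.K := fun k hk => ((hKA k).1 hk).1
  have hYnn : ∀ i ∈ A, ∀ k, 0 ≤ Y i k := by
    intro i hi k
    by_cases hk : k ∈ KA
    · exact hY1 i hi k hk
    · rw [hY0 i k hk]
  have hsumA : ∀ i ∈ A, ∑ k ∈ F.K.erase k₁, Y i k = F.c i - Y i k₁ := by
    intro i hi
    have hk₁A : k₁ ∈ KA := (hKA k₁).2 ⟨hk₁, ⟨i, hi, ((hA i).1 hi).2⟩⟩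
    have h1 : ∑ k ∈ F.K.erase k₁, Y i k = ∑ k ∈ KA.erase k₁, Y i k := by
      refine (Finset.sum_subset (Finset.erase_subset_erase _ hKAsub) ?_).symm
      intro k hk hk'
      apply hY0
      intro hkKA
      exact hk' (Finset.mem_erase.mpr ⟨(Finset.mem_erase.mp hk).1, hkKA⟩)
    have h2 : ∑ k ∈ KA.erase k₁, Y i k + Y i k₁ = ∑ k ∈ KA, Y i k :=
      Finset.sum_erase_add _ _ hk₁A
    have h3 := hYc i hi
    simp only at h3
    rw [h1]; linarith
  have hXk₁ : ∀ i ∈ F.T, i ∉ A → X i k₁ = 0 := fun i hi hiA =>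
    hX2 i hi k₁ hk₁ (fun h => hiA ((hA i).2 ⟨hi, h⟩))
  have hsumB : ∀ i ∈ F.T, i ∉ A → ∑ k ∈ F.K.erase k₁, X i k = F.c i := by
    intro i hi hiA
    have h := Finset.sum_erase_add F.K (X i) hk₁
    rw [hXk₁ i hi hiA] at h
    rw [← hXc i hi]; linarith
  have hcap : ∀ k ∈ F.K.erase k₁,
      ∑ i ∈ F.T, (if i ∈ A then Y i k else X i k) ≤ F.Cap k := by
    intro k hk
    have hkK : k ∈ F.K := Finset.mem_of_mem_erase hk
    have hsplit : ∑ i ∈ F.T, (if i ∈ A then Y i k else X i k)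
        = ∑ i ∈ B, X i k + ∑ i ∈ A, Y i k := by
      rw [hB, ← Finset.sum_sdiff hAsub]
      congr 1
      · exact Finset.sum_congr rfl (fun i hi => if_neg (Finset.mem_sdiff.mp hi).2)
      · exact Finset.sum_congr rfl (fun i hi => if_pos hi)
    by_cases hkA : k ∈ KA
    · have h5 := hY5 k hkA
      simp only at h5
      rw [hsplit, hCap k hkK]
      linarith
    · have hYz : ∑ i ∈ A, Y i k = 0 := Finset.sum_eq_zero (fun i _ => hY0 i k hkA)
      rw [hsplit, hYz]
      have hBsum : ∑ i ∈ B, X i k ≤ ∑ i ∈ F.T, X i k := by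
        rw [hB]
        exact Finset.sum_le_sum_of_subset_of_nonneg Finset.sdiff_subset
          (fun i hi _ => hX1 i hi k hkK)
      linarith [hX5 k hkK]
  refine ⟨⟨?_, ?_, ?_, ?_, ?_⟩, ?_⟩
  · intro i hi k hk
    by_cases hiA : i ∈ A
    · simpa [hiA] using hYnn i hiA k
    · simpa [hiA] using hX1 i hi k (Finset.mem_of_mem_erase hk)
  · intro i hi k hk hact
    by_cases hiA : i ∈ A
    · simp only [if_pos hiA]
      by_cases hkA : k ∈ KA
      · exact hY2 i hiA k hkA hact
      · exact hY0 i k hkA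
    · simp only [if_neg hiA]
      exact hX2 i hi k (Finset.mem_of_mem_erase hk) hact
  · intro i hi k hk
    have hkK : k ∈ F.K := Finset.mem_of_mem_erase hk
    by_cases hiA : i ∈ A
    · simp only [if_pos hiA]
      by_cases hkA : k ∈ KA
      · exact hY3 i hiA k hkA
      · rw [hY0 i k hkA]; exact le_of_lt (hl k hkK)
    · simp only [if_neg hiA]
      exact hX3 i hi k hkK
  · intro i hi
    by_cases hiA : i ∈ A
    · simp only [if_pos hiA]
      exact le_of_eq (hsumA i hiA)
    · simp only [if_neg hiA]
      exact le_of_eq (hsumB i hi hiA)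
  · exact hcap
  · intro i hi
    by_cases hiA : i ∈ A
    · simp only [if_pos hiA]
      exact hsumA i hiA
    · simp only [if_neg hiA]
      exact hsumB i hi hiA
end
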